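/- For all n ≥ 2, the Riordan number satisfies r_n = Σ_{j=0}^{n-2} m_j · r_{n-j-2}, where m_j is the j-th Motzkin number. -/

import Mathlib

/-
Induct on `n`. Splitting off the term `(n + 1, 0)` of the antidiagonal sum for `r (n + 3)` and
rewriting every other `r (j + 1)` as `m j - r j` turns it into
`m (n + 1) + ∑ m i * m j - ∑ m i * r j` over `i + j = n`. The first two terms add up to
`m (n + 2)` by the Motzkin recursion and the last is `r (n + 2)` by induction, so the sum
equals `m (n + 2) - r (n + 2) = r (n + 3)`.
-/

open Finset

/-- The Motzkin numbers. -/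
def motzkin : ℕ → ℕ
  | 0 => 1
  | n + 1 => motzkin n + ∑ i : Fin n, motzkin i * motzkin (n - 1 - i)
decreasing_by
  · exact Nat.lt_succ_self n
  · exact Nat.lt_succ_of_lt i.is_lt
  · have := i.is_lt; omega

/-- The Riordan numbers, defined by `r 0 = 1` and `r (n+1) + r n = m n`. -/
def riordan : ℕ → ℤ
  | 0 => 1
  | n + 1 => (motzkin n : ℤ) - riordan n

theorem motzkin_succ_succ (n : ℕ) :
    motzkin (n + 2) = motzkin (n + 1) + ∑ p ∈ antidiagonal n, motzkin p.1 * motzkin p.2 := by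
  rw [motzkin, Fin.sum_univ_eq_sum_range (fun i => motzkin i * motzkin (n + 1 - 1 - i)),
    Nat.sum_antidiagonal_eq_sum_range_succ (fun i j => motzkin i * motzkin j)]
  rfl

theorem riordan_zero : riordan 0 = 1 := by
  rw [riordan]

theorem riordan_succ (n : ℕ) : riordan (n + 1) = motzkin n - riordan n := by
  rw [riordan]

theorem riordan_add_two_eq_sum_antidiagonal (n : ℕ) :
    riordan (n + 2) = ∑ p ∈ antidiagonal n, (motzkin p.1 : ℤ) * riordan p.2 := by
  induction n with
  | zero => simp [motzkin, riordan]
  | succ n ih =>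
    have hm := congrArg (Nat.cast (R := ℤ)) (motzkin_succ_succ n)
    push_cast at hm
    rw [Nat.sum_antidiagonal_succ', riordan_succ (n + 2), hm, ih]
    simp only [riordan_succ, riordan_zero, mul_sub, sum_sub_distrib, mul_one]
    ring

/-- For all `n ≥ 2`, `r n = ∑_{j=0}^{n-2} m j · r (n-j-2)`. -/
theorem riordan_convolution (n : ℕ) (hn : 2 ≤ n) :
    riordan n = ∑ j ∈ Finset.range (n - 1), (motzkin j : ℤ) * riordan (n - j - 2) := by
  obtain ⟨k, rfl⟩ := Nat.exists_eq_add_of_le' hn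
  rw [riordan_add_two_eq_sum_antidiagonal, Nat.sum_antidiagonal_eq_sum_range_succ (fun i j => (motzkin i : ℤ) * riordan j)]
  refine sum_congr rfl fun j _ => ?_
  congr 2
  omega
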